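/- Quasi-models and models of a CTL formula are interdefinable: (1) if (W,R,V,w) is a model of φ, then (W,R,L_φ) with L_φ(ψ) := {u ∈ W : (W,R,V,u) ⊨ ψ} for ψ in the closure of φ is a quasi-model of φ; (2) if (W,R,L) is a quasi-model of φ, then for every w ∈ L(φ), (W,R,V_L,w) with V_L(p) := L(p) for propositions p in φ is a model of φ. -/
import Mathlib


def Serial {W : Type} (R : W → W → Prop) : Prop := ∀ w, ∃ u, R w u

def IsPath {W : Type} (R : W → W → Prop) (π : ℕ → W) : Prop := ∀ i, R (π i) (π (i+1))

structure Kripke (W : Type) where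
  R : W → W → Prop
  V : ℕ → W → Prop

inductive CTL where
  | atom : ℕ → CTL
  | neg  : CTL → CTL
  | and  : CTL → CTL → CTL
  | or   : CTL → CTL → CTL
  | AX : CTL → CTL
  | EX : CTL → CTL
  | AF : CTL → CTL
  | EF : CTL → CTL
  | AG : CTL → CTL
  | EG : CTL → CTL
  | AU : CTL → CTL → CTL
  | EU : CTL → CTL → CTL
  | AR : CTL → CTL → CTL
  | ER : CTL → CTL → CTL
deriving DecidableEq

def sat {W : Type} (K : Kripke W) : CTL → W → Prop
  | .atom p, w => K.V p w
  | .neg φ, w => ¬ sat K φ w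
  | .and φ ψ, w => sat K φ w ∧ sat K ψ w
  | .or φ ψ, w => sat K φ w ∨ sat K ψ w
  | .AX φ, w => ∀ π : ℕ → W, IsPath K.R π → π 0 = w → sat K φ (π 1)
  | .EX φ, w => ∃ π : ℕ → W, IsPath K.R π ∧ π 0 = w ∧ sat K φ (π 1)
  | .AF φ, w => ∀ π : ℕ → W, IsPath K.R π → π 0 = w → ∃ i, sat K φ (π i)
  | .EF φ, w => ∃ π : ℕ → W, IsPath K.R π ∧ π 0 = w ∧ ∃ i, sat K φ (π i)
  | .AG φ, w => ∀ π : ℕ → W, IsPath K.R π → π 0 = w → ∀ i, sat K φ (π i)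
  | .EG φ, w => ∃ π : ℕ → W, IsPath K.R π ∧ π 0 = w ∧ ∀ i, sat K φ (π i)
  | .AU φ ψ, w => ∀ π : ℕ → W, IsPath K.R π → π 0 = w →
      ∃ i, sat K ψ (π i) ∧ ∀ j, j < i → sat K φ (π j)
  | .EU φ ψ, w => ∃ π : ℕ → W, IsPath K.R π ∧ π 0 = w ∧
      ∃ i, sat K ψ (π i) ∧ ∀ j, j < i → sat K φ (π j)
  | .AR φ ψ, w => ∀ π : ℕ → W, IsPath K.R π → π 0 = w →
      ∀ i, sat K ψ (π i) ∨ ∃ j, j < i ∧ sat K φ (π j)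
  | .ER φ ψ, w => ∃ π : ℕ → W, IsPath K.R π ∧ π 0 = w ∧
      ∀ i, sat K ψ (π i) ∨ ∃ j, j < i ∧ sat K φ (π j)

def CTL.len : CTL → ℕ
  | .atom _ => 1
  | .neg φ => φ.len + 1
  | .and φ ψ => φ.len + ψ.len + 1
  | .or φ ψ => φ.len + ψ.len + 1
  | .AX φ => φ.len + 1
  | .EX φ => φ.len + 1
  | .AF φ => φ.len + 1
  | .EF φ => φ.len + 1
  | .AG φ => φ.len + 1
  | .EG φ => φ.len + 1
  | .AU φ ψ => φ.len + ψ.len + 1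
  | .EU φ ψ => φ.len + ψ.len + 1
  | .AR φ ψ => φ.len + ψ.len + 1
  | .ER φ ψ => φ.len + ψ.len + 1

def CTL.td : CTL → ℕ
  | .atom _ => 0
  | .neg φ => φ.td
  | .and φ ψ => max φ.td ψ.td
  | .or φ ψ => max φ.td ψ.td
  | .AX φ => φ.td + 1
  | .EX φ => φ.td + 1
  | .AF φ => φ.td + 1
  | .EF φ => φ.td + 1
  | .AG φ => φ.td + 1
  | .EG φ => φ.td + 1
  | .AU φ ψ => max φ.td ψ.td + 1
  | .EU φ ψ => max φ.td ψ.td + 1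
  | .AR φ ψ => max φ.td ψ.td + 1
  | .ER φ ψ => max φ.td ψ.td + 1

/-- `∼ψ`: the simplified negation of `ψ`. -/
def simpNeg : CTL → CTL
  | .neg φ => φ
  | φ => .neg φ

/-- The closure `cl(φ)` of a CTL formula, as an inductive predicate: the smallest set
containing `φ`, closed under subformulas of Boolean connectives, under subformulas of
temporal operators together with their dualized negations, and under simplified
negation in both directions. -/
inductive Cl (φ : CTL) : CTL → Prop
  | base : Cl φ φ
  | negSub {ψ} : Cl φ (.neg ψ) → Cl φ ψ
  | andL {ψ ξ} : Cl φ (.and ψ ξ) → Cl φ ψ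
  | andR {ψ ξ} : Cl φ (.and ψ ξ) → Cl φ ξ
  | orL {ψ ξ} : Cl φ (.or ψ ξ) → Cl φ ψ
  | orR {ψ ξ} : Cl φ (.or ψ ξ) → Cl φ ξ
  | ax {ψ} : Cl φ (.AX ψ) → Cl φ ψ
  | axD {ψ} : Cl φ (.AX ψ) → Cl φ (.EX (simpNeg ψ))
  | ex {ψ} : Cl φ (.EX ψ) → Cl φ ψ
  | exD {ψ} : Cl φ (.EX ψ) → Cl φ (.AX (simpNeg ψ))
  | af {ψ} : Cl φ (.AF ψ) → Cl φ ψ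
  | afD {ψ} : Cl φ (.AF ψ) → Cl φ (.EG (simpNeg ψ))
  | ef {ψ} : Cl φ (.EF ψ) → Cl φ ψ
  | efD {ψ} : Cl φ (.EF ψ) → Cl φ (.AG (simpNeg ψ))
  | ag {ψ} : Cl φ (.AG ψ) → Cl φ ψ
  | agD {ψ} : Cl φ (.AG ψ) → Cl φ (.EF (simpNeg ψ))
  | eg {ψ} : Cl φ (.EG ψ) → Cl φ ψ
  | egD {ψ} : Cl φ (.EG ψ) → Cl φ (.AF (simpNeg ψ))
  | auL {ψ ξ} : Cl φ (.AU ψ ξ) → Cl φ ψ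
  | auR {ψ ξ} : Cl φ (.AU ψ ξ) → Cl φ ξ
  | auD {ψ ξ} : Cl φ (.AU ψ ξ) → Cl φ (.ER (simpNeg ψ) (simpNeg ξ))
  | euL {ψ ξ} : Cl φ (.EU ψ ξ) → Cl φ ψ
  | euR {ψ ξ} : Cl φ (.EU ψ ξ) → Cl φ ξ
  | euD {ψ ξ} : Cl φ (.EU ψ ξ) → Cl φ (.AR (simpNeg ψ) (simpNeg ξ))
  | arL {ψ ξ} : Cl φ (.AR ψ ξ) → Cl φ ψ
  | arR {ψ ξ} : Cl φ (.AR ψ ξ) → Cl φ ξ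
  | arD {ψ ξ} : Cl φ (.AR ψ ξ) → Cl φ (.EU (simpNeg ψ) (simpNeg ξ))
  | erL {ψ ξ} : Cl φ (.ER ψ ξ) → Cl φ ψ
  | erR {ψ ξ} : Cl φ (.ER ψ ξ) → Cl φ ξ
  | erD {ψ ξ} : Cl φ (.ER ψ ξ) → Cl φ (.AU (simpNeg ψ) (simpNeg ξ))
  | sneg {ψ} : Cl φ ψ → Cl φ (simpNeg ψ)
  | sneg' {ψ} : Cl φ (simpNeg ψ) → Cl φ ψ

/-- Occurrence of an atomic proposition in a formula. -/
def atomIn (p : ℕ) : CTL → Prop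
  | .atom q => p = q
  | .neg φ => atomIn p φ
  | .and φ ψ => atomIn p φ ∨ atomIn p ψ
  | .or φ ψ => atomIn p φ ∨ atomIn p ψ
  | .AX φ => atomIn p φ
  | .EX φ => atomIn p φ
  | .AF φ => atomIn p φ
  | .EF φ => atomIn p φ
  | .AG φ => atomIn p φ
  | .EG φ => atomIn p φ
  | .AU φ ψ => atomIn p φ ∨ atomIn p ψ
  | .EU φ ψ => atomIn p φ ∨ atomIn p ψ
  | .AR φ ψ => atomIn p φ ∨ atomIn p ψ
  | .ER φ ψ => atomIn p φ ∨ atomIn p ψ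

/-- A quasi-model of `φ`: a serial Kripke frame with an extended labeling
`L : cl(φ) → 𝒫(W)` obeying the local quasi-label conditions (Q1)–(Q4), the path
conditions (Q5) for labeled `A`- and `E`-formulas, and (Q6) `L(φ) ≠ ∅`. -/
structure QuasiModel (φ : CTL) (W : Type) where
  R : W → W → Prop
  L : CTL → Set W
  serial : Serial R
  -- (Q1): local Boolean conditions
  q1_and : ∀ ψ ξ w, Cl φ (.and ψ ξ) → w ∈ L (.and ψ ξ) → w ∈ L ψ ∧ w ∈ L ξ
  q1_andN : ∀ ψ ξ w, Cl φ (.and ψ ξ) → w ∈ L (simpNeg (.and ψ ξ)) →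
    w ∈ L (simpNeg ψ) ∨ w ∈ L (simpNeg ξ)
  q1_or : ∀ ψ ξ w, Cl φ (.or ψ ξ) → w ∈ L (.or ψ ξ) → w ∈ L ψ ∨ w ∈ L ξ
  q1_orN : ∀ ψ ξ w, Cl φ (.or ψ ξ) → w ∈ L (simpNeg (.or ψ ξ)) →
    w ∈ L (simpNeg ψ) ∧ w ∈ L (simpNeg ξ)
  q1_neg : ∀ ψ w, Cl φ (.neg ψ) → w ∈ L (.neg ψ) → w ∈ L (simpNeg ψ)
  -- (Q2): consistency
  q2 : ∀ ψ w, Cl φ ψ → ¬ (w ∈ L ψ ∧ w ∈ L (simpNeg ψ))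
  -- (Q3): negated unary path-quantified formulas are pushed to duals
  q3_ax : ∀ ψ w, Cl φ (.neg (.AX ψ)) → w ∈ L (.neg (.AX ψ)) → w ∈ L (.EX (simpNeg ψ))
  q3_ex : ∀ ψ w, Cl φ (.neg (.EX ψ)) → w ∈ L (.neg (.EX ψ)) → w ∈ L (.AX (simpNeg ψ))
  q3_af : ∀ ψ w, Cl φ (.neg (.AF ψ)) → w ∈ L (.neg (.AF ψ)) → w ∈ L (.EG (simpNeg ψ))
  q3_ef : ∀ ψ w, Cl φ (.neg (.EF ψ)) → w ∈ L (.neg (.EF ψ)) → w ∈ L (.AG (simpNeg ψ))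
  q3_ag : ∀ ψ w, Cl φ (.neg (.AG ψ)) → w ∈ L (.neg (.AG ψ)) → w ∈ L (.EF (simpNeg ψ))
  q3_eg : ∀ ψ w, Cl φ (.neg (.EG ψ)) → w ∈ L (.neg (.EG ψ)) → w ∈ L (.AF (simpNeg ψ))
  -- (Q4): negated binary path-quantified formulas are pushed to duals
  q4_au : ∀ ψ ξ w, Cl φ (.neg (.AU ψ ξ)) → w ∈ L (.neg (.AU ψ ξ)) →
    w ∈ L (.ER (simpNeg ψ) (simpNeg ξ))
  q4_eu : ∀ ψ ξ w, Cl φ (.neg (.EU ψ ξ)) → w ∈ L (.neg (.EU ψ ξ)) →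
    w ∈ L (.AR (simpNeg ψ) (simpNeg ξ))
  q4_ar : ∀ ψ ξ w, Cl φ (.neg (.AR ψ ξ)) → w ∈ L (.neg (.AR ψ ξ)) →
    w ∈ L (.EU (simpNeg ψ) (simpNeg ξ))
  q4_er : ∀ ψ ξ w, Cl φ (.neg (.ER ψ ξ)) → w ∈ L (.neg (.ER ψ ξ)) →
    w ∈ L (.AU (simpNeg ψ) (simpNeg ξ))
  -- (Q5): path conditions
  q5_ax : ∀ ψ w, Cl φ (.AX ψ) → w ∈ L (.AX ψ) →
    ∀ π : ℕ → W, IsPath R π → π 0 = w → π 1 ∈ L ψ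
  q5_ex : ∀ ψ w, Cl φ (.EX ψ) → w ∈ L (.EX ψ) →
    ∃ π : ℕ → W, IsPath R π ∧ π 0 = w ∧ π 1 ∈ L ψ
  q5_af : ∀ ψ w, Cl φ (.AF ψ) → w ∈ L (.AF ψ) →
    ∀ π : ℕ → W, IsPath R π → π 0 = w → ∃ i, π i ∈ L ψ
  q5_ef : ∀ ψ w, Cl φ (.EF ψ) → w ∈ L (.EF ψ) →
    ∃ π : ℕ → W, IsPath R π ∧ π 0 = w ∧ ∃ i, π i ∈ L ψ
  q5_ag : ∀ ψ w, Cl φ (.AG ψ) → w ∈ L (.AG ψ) →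
    ∀ π : ℕ → W, IsPath R π → π 0 = w → ∀ i, π i ∈ L ψ
  q5_eg : ∀ ψ w, Cl φ (.EG ψ) → w ∈ L (.EG ψ) →
    ∃ π : ℕ → W, IsPath R π ∧ π 0 = w ∧ ∀ i, π i ∈ L ψ
  q5_au : ∀ ψ ξ w, Cl φ (.AU ψ ξ) → w ∈ L (.AU ψ ξ) →
    ∀ π : ℕ → W, IsPath R π → π 0 = w → ∃ i, π i ∈ L ξ ∧ ∀ j, j < i → π j ∈ L ψ
  q5_eu : ∀ ψ ξ w, Cl φ (.EU ψ ξ) → w ∈ L (.EU ψ ξ) →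
    ∃ π : ℕ → W, IsPath R π ∧ π 0 = w ∧ ∃ i, π i ∈ L ξ ∧ ∀ j, j < i → π j ∈ L ψ
  q5_ar : ∀ ψ ξ w, Cl φ (.AR ψ ξ) → w ∈ L (.AR ψ ξ) →
    ∀ π : ℕ → W, IsPath R π → π 0 = w → ∀ i, π i ∈ L ξ ∨ ∃ j, j < i ∧ π j ∈ L ψ
  q5_er : ∀ ψ ξ w, Cl φ (.ER ψ ξ) → w ∈ L (.ER ψ ξ) →
    ∃ π : ℕ → W, IsPath R π ∧ π 0 = w ∧ ∀ i, π i ∈ L ξ ∨ ∃ j, j < i ∧ π j ∈ L ψ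
  -- (Q6)
  q6 : ∃ w, w ∈ L φ

lemma sat_simpNeg {W : Type} (K : Kripke W) (ψ : CTL) (w : W) :
    sat K (simpNeg ψ) w ↔ ¬ sat K ψ w := by
  cases ψ <;> simp [simpNeg, sat]

lemma atomIn_simpNeg (p : ℕ) (ψ : CTL) : atomIn p (simpNeg ψ) ↔ atomIn p ψ := by
  cases ψ <;> simp [simpNeg, atomIn]

lemma cl_atomIn {φ ψ : CTL} {p : ℕ} (h : Cl φ ψ) : atomIn p ψ → atomIn p φ := by
  induction h <;> simp_all [atomIn, atomIn_simpNeg]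

lemma quasi_sound {φ : CTL} {W : Type} (Q : QuasiModel φ W) (V : ℕ → W → Prop)
    (hV : ∀ p u, V p u ↔ atomIn p φ ∧ u ∈ Q.L (.atom p)) :
    ∀ ψ : CTL, Cl φ ψ → ∀ w : W,
      (w ∈ Q.L ψ → sat ⟨Q.R, V⟩ ψ w) ∧
      (w ∈ Q.L (simpNeg ψ) → ¬ sat ⟨Q.R, V⟩ ψ w) := by
  intro ψ
  induction ψ with
  | atom p =>
    intro hcl w
    refine ⟨fun h => ?_, fun h hs => ?_⟩
    · exact (hV p w).mpr ⟨cl_atomIn hcl rfl, h⟩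
    · exact Q.q2 (.atom p) w hcl ⟨((hV p w).mp hs).2, h⟩
  | neg χ ih =>
    intro hcl w
    have hχ := ih (Cl.negSub hcl)
    refine ⟨fun h => ?_, fun h hs => ?_⟩
    · exact (hχ w).2 (Q.q1_neg χ w hcl h)
    · exact hs ((hχ w).1 h)
  | and χ ξ ihχ ihξ =>
    intro hcl w
    refine ⟨fun h => ?_, fun h hs => ?_⟩
    · have h' := Q.q1_and χ ξ w hcl h
      exact ⟨(ihχ (Cl.andL hcl) w).1 h'.1, (ihξ (Cl.andR hcl) w).1 h'.2⟩
    · rcases Q.q1_andN χ ξ w hcl h with h' | h'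
      · exact (ihχ (Cl.andL hcl) w).2 h' hs.1
      · exact (ihξ (Cl.andR hcl) w).2 h' hs.2
  | or χ ξ ihχ ihξ =>
    intro hcl w
    refine ⟨fun h => ?_, fun h hs => ?_⟩
    · rcases Q.q1_or χ ξ w hcl h with h' | h'
      · exact Or.inl ((ihχ (Cl.orL hcl) w).1 h')
      · exact Or.inr ((ihξ (Cl.orR hcl) w).1 h')
    · have h' := Q.q1_orN χ ξ w hcl h
      rcases hs with hs | hs
      · exact (ihχ (Cl.orL hcl) w).2 h'.1 hs
      · exact (ihξ (Cl.orR hcl) w).2 h'.2 hs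
  | AX χ ih =>
    intro hcl w
    refine ⟨fun h π hπ h0 => ?_, fun h hs => ?_⟩
    · exact (ih (Cl.ax hcl) _).1 (Q.q5_ax χ w hcl h π hπ h0)
    · have h2 := Q.q3_ax χ w (Cl.sneg hcl) h
      obtain ⟨π, h1, h0, h3⟩ := Q.q5_ex _ w (Cl.axD hcl) h2
      exact (ih (Cl.ax hcl) _).2 h3 (hs π h1 h0)
  | EX χ ih =>
    intro hcl w
    refine ⟨fun h => ?_, fun h hs => ?_⟩
    · obtain ⟨π, h1, h0, h3⟩ := Q.q5_ex χ w hcl h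
      exact ⟨π, h1, h0, (ih (Cl.ex hcl) _).1 h3⟩
    · have h2 := Q.q3_ex χ w (Cl.sneg hcl) h
      obtain ⟨π, h1, h0, h3⟩ := hs
      exact (ih (Cl.ex hcl) _).2 (Q.q5_ax _ w (Cl.exD hcl) h2 π h1 h0) h3
  | AF χ ih =>
    intro hcl w
    refine ⟨fun h π hπ h0 => ?_, fun h hs => ?_⟩
    · obtain ⟨i, hi⟩ := Q.q5_af χ w hcl h π hπ h0
      exact ⟨i, (ih (Cl.af hcl) _).1 hi⟩
    · have h2 := Q.q3_af χ w (Cl.sneg hcl) h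
      obtain ⟨π, h1, h0, h3⟩ := Q.q5_eg _ w (Cl.afD hcl) h2
      obtain ⟨i, hi⟩ := hs π h1 h0
      exact (ih (Cl.af hcl) _).2 (h3 i) hi
  | EF χ ih =>
    intro hcl w
    refine ⟨fun h => ?_, fun h hs => ?_⟩
    · obtain ⟨π, h1, h0, i, hi⟩ := Q.q5_ef χ w hcl h
      exact ⟨π, h1, h0, i, (ih (Cl.ef hcl) _).1 hi⟩
    · have h2 := Q.q3_ef χ w (Cl.sneg hcl) h
      obtain ⟨π, h1, h0, i, hi⟩ := hs
      exact (ih (Cl.ef hcl) _).2 (Q.q5_ag _ w (Cl.efD hcl) h2 π h1 h0 i) hi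
  | AG χ ih =>
    intro hcl w
    refine ⟨fun h π hπ h0 i => ?_, fun h hs => ?_⟩
    · exact (ih (Cl.ag hcl) _).1 (Q.q5_ag χ w hcl h π hπ h0 i)
    · have h2 := Q.q3_ag χ w (Cl.sneg hcl) h
      obtain ⟨π, h1, h0, i, hi⟩ := Q.q5_ef _ w (Cl.agD hcl) h2
      exact (ih (Cl.ag hcl) _).2 hi (hs π h1 h0 i)
  | EG χ ih =>
    intro hcl w
    refine ⟨fun h => ?_, fun h hs => ?_⟩
    · obtain ⟨π, h1, h0, h3⟩ := Q.q5_eg χ w hcl h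
      exact ⟨π, h1, h0, fun i => (ih (Cl.eg hcl) _).1 (h3 i)⟩
    · have h2 := Q.q3_eg χ w (Cl.sneg hcl) h
      obtain ⟨π, h1, h0, h3⟩ := hs
      obtain ⟨i, hi⟩ := Q.q5_af _ w (Cl.egD hcl) h2 π h1 h0
      exact (ih (Cl.eg hcl) _).2 hi (h3 i)
  | AU χ ξ ihχ ihξ =>
    intro hcl w
    refine ⟨fun h π hπ h0 => ?_, fun h hs => ?_⟩
    · obtain ⟨i, hi, hj⟩ := Q.q5_au χ ξ w hcl h π hπ h0
      exact ⟨i, (ihξ (Cl.auR hcl) _).1 hi, fun j hji => (ihχ (Cl.auL hcl) _).1 (hj j hji)⟩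
    · have h2 := Q.q4_au χ ξ w (Cl.sneg hcl) h
      obtain ⟨π, h1, h0, h3⟩ := Q.q5_er _ _ w (Cl.auD hcl) h2
      obtain ⟨i, hi, hj⟩ := hs π h1 h0
      rcases h3 i with hξ' | ⟨j, hji, hψ'⟩
      · exact (ihξ (Cl.auR hcl) _).2 hξ' hi
      · exact (ihχ (Cl.auL hcl) _).2 hψ' (hj j hji)
  | EU χ ξ ihχ ihξ =>
    intro hcl w
    refine ⟨fun h => ?_, fun h hs => ?_⟩
    · obtain ⟨π, h1, h0, i, hi, hj⟩ := Q.q5_eu χ ξ w hcl h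
      exact ⟨π, h1, h0, i, (ihξ (Cl.euR hcl) _).1 hi,
        fun j hji => (ihχ (Cl.euL hcl) _).1 (hj j hji)⟩
    · have h2 := Q.q4_eu χ ξ w (Cl.sneg hcl) h
      obtain ⟨π, h1, h0, i, hi, hj⟩ := hs
      rcases Q.q5_ar _ _ w (Cl.euD hcl) h2 π h1 h0 i with hξ' | ⟨j, hji, hψ'⟩
      · exact (ihξ (Cl.euR hcl) _).2 hξ' hi
      · exact (ihχ (Cl.euL hcl) _).2 hψ' (hj j hji)
  | AR χ ξ ihχ ihξ =>
    intro hcl w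
    refine ⟨fun h π hπ h0 i => ?_, fun h hs => ?_⟩
    · rcases Q.q5_ar χ ξ w hcl h π hπ h0 i with h' | ⟨j, hj, h'⟩
      · exact Or.inl ((ihξ (Cl.arR hcl) _).1 h')
      · exact Or.inr ⟨j, hj, (ihχ (Cl.arL hcl) _).1 h'⟩
    · have h2 := Q.q4_ar χ ξ w (Cl.sneg hcl) h
      obtain ⟨π, h1, h0, i, hi, hj⟩ := Q.q5_eu _ _ w (Cl.arD hcl) h2
      rcases hs π h1 h0 i with hξ' | ⟨j, hji, hψ'⟩
      · exact (ihξ (Cl.arR hcl) _).2 hi hξ'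
      · exact (ihχ (Cl.arL hcl) _).2 (hj j hji) hψ'
  | ER χ ξ ihχ ihξ =>
    intro hcl w
    refine ⟨fun h => ?_, fun h hs => ?_⟩
    · obtain ⟨π, h1, h0, h3⟩ := Q.q5_er χ ξ w hcl h
      refine ⟨π, h1, h0, fun i => ?_⟩
      rcases h3 i with h' | ⟨j, hj, h'⟩
      · exact Or.inl ((ihξ (Cl.erR hcl) _).1 h')
      · exact Or.inr ⟨j, hj, (ihχ (Cl.erL hcl) _).1 h'⟩
    · have h2 := Q.q4_er χ ξ w (Cl.sneg hcl) h
      obtain ⟨π, h1, h0, h3⟩ := hs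
      obtain ⟨i, hi, hj⟩ := Q.q5_au _ _ w (Cl.erD hcl) h2 π h1 h0
      rcases h3 i with hξ' | ⟨j, hji, hψ'⟩
      · exact (ihξ (Cl.erR hcl) _).2 hi hξ'
      · exact (ihχ (Cl.erL hcl) _).2 (hj j hji) hψ'

/-- Quasi-models and models of a CTL formula are interdefinable:
(1) if `(W,R,V,w)` is a model of `φ`, the canonical labeling
`L_φ(ψ) := {u : u ⊨ ψ}` (for `ψ ∈ cl(φ)`) turns `(W,R)` into a quasi-model of `φ`;
(2) if `(W,R,L)` is a quasi-model of `φ`, then for every `w ∈ L(φ)` the valuation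
`V_L(p) := L(p)` for atoms `p` occurring in `φ` (and `∅` otherwise) yields a model
`(W,R,V_L,w)` of `φ`. -/
theorem quasiModel_model_correspondence (φ : CTL) (W : Type) :
    (∀ (K : Kripke W) (w : W), Serial K.R → sat K φ w →
      Nonempty {Q : QuasiModel φ W //
        Q.R = K.R ∧ Q.L = fun ψ => {u : W | Cl φ ψ ∧ sat K ψ u}}) ∧
    (∀ Q : QuasiModel φ W, ∀ w ∈ Q.L φ,
      sat ⟨Q.R, fun p u => atomIn p φ ∧ u ∈ Q.L (.atom p)⟩ φ w) := by
  constructor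
  · intro K w hser hsat
    refine ⟨⟨⟨K.R, fun ψ => {u : W | Cl φ ψ ∧ sat K ψ u}, hser,
      ?_, ?_, ?_, ?_, ?_, ?_, ?_, ?_, ?_, ?_, ?_, ?_, ?_, ?_, ?_, ?_, ?_,
      ?_, ?_, ?_, ?_, ?_, ?_, ?_, ?_, ?_, ⟨w, Cl.base, hsat⟩⟩, rfl, rfl⟩⟩
    -- q1_and
    · rintro ψ ξ u hcl ⟨-, hs⟩
      exact ⟨⟨Cl.andL hcl, hs.1⟩, ⟨Cl.andR hcl, hs.2⟩⟩
    -- q1_andN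
    · rintro ψ ξ u hcl ⟨-, hs⟩
      rw [sat_simpNeg] at hs
      rcases not_and_or.mp hs with h | h
      · exact Or.inl ⟨Cl.sneg (Cl.andL hcl), (sat_simpNeg K ψ u).mpr h⟩
      · exact Or.inr ⟨Cl.sneg (Cl.andR hcl), (sat_simpNeg K ξ u).mpr h⟩
    -- q1_or
    · rintro ψ ξ u hcl ⟨-, hs⟩
      rcases hs with h | h
      · exact Or.inl ⟨Cl.orL hcl, h⟩
      · exact Or.inr ⟨Cl.orR hcl, h⟩
    -- q1_orN
    · rintro ψ ξ u hcl ⟨-, hs⟩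
      rw [sat_simpNeg] at hs
      rcases not_or.mp hs with ⟨h1, h2⟩
      exact ⟨⟨Cl.sneg (Cl.orL hcl), (sat_simpNeg K ψ u).mpr h1⟩,
        ⟨Cl.sneg (Cl.orR hcl), (sat_simpNeg K ξ u).mpr h2⟩⟩
    -- q1_neg
    · rintro ψ u hcl ⟨-, hs⟩
      exact ⟨Cl.sneg (Cl.negSub hcl), (sat_simpNeg K ψ u).mpr hs⟩
    -- q2
    · rintro ψ u hcl ⟨⟨-, h1⟩, ⟨-, h2⟩⟩
      exact (sat_simpNeg K ψ u).mp h2 h1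
    -- q3_ax
    · rintro ψ u hcl ⟨-, hs⟩
      simp only [sat] at hs
      push_neg at hs
      obtain ⟨π, h1, h0, h3⟩ := hs
      exact ⟨Cl.axD (Cl.negSub hcl), π, h1, h0, (sat_simpNeg K ψ _).mpr h3⟩
    -- q3_ex
    · rintro ψ u hcl ⟨-, hs⟩
      simp only [sat] at hs
      push_neg at hs
      exact ⟨Cl.exD (Cl.negSub hcl),
        fun π h1 h0 => (sat_simpNeg K ψ _).mpr (hs π h1 h0)⟩
    -- q3_af
    · rintro ψ u hcl ⟨-, hs⟩
      simp only [sat] at hs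
      push_neg at hs
      obtain ⟨π, h1, h0, h3⟩ := hs
      exact ⟨Cl.afD (Cl.negSub hcl), π, h1, h0,
        fun i => (sat_simpNeg K ψ _).mpr (h3 i)⟩
    -- q3_ef
    · rintro ψ u hcl ⟨-, hs⟩
      simp only [sat] at hs
      push_neg at hs
      exact ⟨Cl.efD (Cl.negSub hcl),
        fun π h1 h0 i => (sat_simpNeg K ψ _).mpr (hs π h1 h0 i)⟩
    -- q3_ag
    · rintro ψ u hcl ⟨-, hs⟩
      simp only [sat] at hs
      push_neg at hs
      obtain ⟨π, h1, h0, i, h3⟩ := hs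
      exact ⟨Cl.agD (Cl.negSub hcl), π, h1, h0, i, (sat_simpNeg K ψ _).mpr h3⟩
    -- q3_eg
    · rintro ψ u hcl ⟨-, hs⟩
      simp only [sat] at hs
      push_neg at hs
      refine ⟨Cl.egD (Cl.negSub hcl), fun π h1 h0 => ?_⟩
      obtain ⟨i, hi⟩ := hs π h1 h0
      exact ⟨i, (sat_simpNeg K ψ _).mpr hi⟩
    -- q4_au
    · rintro ψ ξ u hcl ⟨-, hs⟩
      simp only [sat] at hs
      push_neg at hs
      obtain ⟨π, h1, h0, h3⟩ := hs
      refine ⟨Cl.auD (Cl.negSub hcl), π, h1, h0, fun i => ?_⟩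
      by_cases hξ : sat K ξ (π i)
      · obtain ⟨j, hj, hψ⟩ := h3 i hξ
        exact Or.inr ⟨j, hj, (sat_simpNeg K ψ _).mpr hψ⟩
      · exact Or.inl ((sat_simpNeg K ξ _).mpr hξ)
    -- q4_eu
    · rintro ψ ξ u hcl ⟨-, hs⟩
      simp only [sat] at hs
      push_neg at hs
      refine ⟨Cl.euD (Cl.negSub hcl), fun π h1 h0 i => ?_⟩
      by_cases hξ : sat K ξ (π i)
      · obtain ⟨j, hj, hψ⟩ := hs π h1 h0 i hξ
        exact Or.inr ⟨j, hj, (sat_simpNeg K ψ _).mpr hψ⟩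
      · exact Or.inl ((sat_simpNeg K ξ _).mpr hξ)
    -- q4_ar
    · rintro ψ ξ u hcl ⟨-, hs⟩
      simp only [sat] at hs
      push_neg at hs
      obtain ⟨π, h1, h0, i, hi, hj⟩ := hs
      exact ⟨Cl.arD (Cl.negSub hcl), π, h1, h0, i, (sat_simpNeg K ξ _).mpr hi,
        fun j hji => (sat_simpNeg K ψ _).mpr (hj j hji)⟩
    -- q4_er
    · rintro ψ ξ u hcl ⟨-, hs⟩
      simp only [sat] at hs
      push_neg at hs
      refine ⟨Cl.erD (Cl.negSub hcl), fun π h1 h0 => ?_⟩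
      obtain ⟨i, hi, hj⟩ := hs π h1 h0
      exact ⟨i, (sat_simpNeg K ξ _).mpr hi,
        fun j hji => (sat_simpNeg K ψ _).mpr (hj j hji)⟩
    -- q5_ax
    · rintro ψ u hcl ⟨-, hs⟩ π hπ h0
      exact ⟨Cl.ax hcl, hs π hπ h0⟩
    -- q5_ex
    · rintro ψ u hcl ⟨-, hs⟩
      obtain ⟨π, h1, h0, h3⟩ := hs
      exact ⟨π, h1, h0, Cl.ex hcl, h3⟩
    -- q5_af
    · rintro ψ u hcl ⟨-, hs⟩ π hπ h0
      obtain ⟨i, hi⟩ := hs π hπ h0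
      exact ⟨i, Cl.af hcl, hi⟩
    -- q5_ef
    · rintro ψ u hcl ⟨-, hs⟩
      obtain ⟨π, h1, h0, i, hi⟩ := hs
      exact ⟨π, h1, h0, i, Cl.ef hcl, hi⟩
    -- q5_ag
    · rintro ψ u hcl ⟨-, hs⟩ π hπ h0 i
      exact ⟨Cl.ag hcl, hs π hπ h0 i⟩
    -- q5_eg
    · rintro ψ u hcl ⟨-, hs⟩
      obtain ⟨π, h1, h0, h3⟩ := hs
      exact ⟨π, h1, h0, fun i => ⟨Cl.eg hcl, h3 i⟩⟩
    -- q5_au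
    · rintro ψ ξ u hcl ⟨-, hs⟩ π hπ h0
      obtain ⟨i, hi, hj⟩ := hs π hπ h0
      exact ⟨i, ⟨Cl.auR hcl, hi⟩, fun j hji => ⟨Cl.auL hcl, hj j hji⟩⟩
    -- q5_eu
    · rintro ψ ξ u hcl ⟨-, hs⟩
      obtain ⟨π, h1, h0, i, hi, hj⟩ := hs
      exact ⟨π, h1, h0, i, ⟨Cl.euR hcl, hi⟩, fun j hji => ⟨Cl.euL hcl, hj j hji⟩⟩
    -- q5_ar
    · rintro ψ ξ u hcl ⟨-, hs⟩ π hπ h0 i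
      rcases hs π hπ h0 i with h | ⟨j, hj, h⟩
      · exact Or.inl ⟨Cl.arR hcl, h⟩
      · exact Or.inr ⟨j, hj, Cl.arL hcl, h⟩
    -- q5_er
    · rintro ψ ξ u hcl ⟨-, hs⟩
      obtain ⟨π, h1, h0, h3⟩ := hs
      refine ⟨π, h1, h0, fun i => ?_⟩
      rcases h3 i with h | ⟨j, hj, h⟩
      · exact Or.inl ⟨Cl.erR hcl, h⟩
      · exact Or.inr ⟨j, hj, Cl.erL hcl, h⟩
  · intro Q w hw
    exact (quasi_sound Q _ (fun p u => Iff.rfl) φ Cl.base w).1 hw
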